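/- In the star complement setup for a signed graph Σ with eigenvalue μ, underlying graph G, and columns s_1,…,s_n of S = (B | C − μI), the matrix of values ((s_uᵀ(μI−C)⁻¹s_v)²)_{u,v} equals μ²I + A_G. Consequently, if −μ² is not an eigenvalue of A_G, the functions P_u(x) = (s_uᵀ(μI−C)⁻¹x)² on ℝ^t are linearly independent. -/

import Mathlib

open Matrix

/-- The bilinear form `⟨x, y⟩ = xᵀ (μI - C)⁻¹ y` associated with a star complement. -/
noncomputable def starBilin {t : ℕ} (μ : ℝ) (C : Matrix (Fin t) (Fin t) ℝ) (x y : Fin t → ℝ) : ℝ :=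
  x ⬝ᵥ ((μ • (1 : Matrix (Fin t) (Fin t) ℝ) - C)⁻¹).mulVec y

/-!
With `M = μI - C`, the matrix `S = (B | -M)` satisfies
`Sᵀ M⁻¹ S = [[Bᵀ M⁻¹ B, -Bᵀ], [-B, M]] = μI - A`, the upper-left block by the star
complement reconstruction `μI - A_S = Bᵀ M⁻¹ B`. Squaring entrywise, a zero diagonal and entries in
`{0, ±1}` give `μ²I + A_G`. If `∑ g_u P_u = 0`, evaluating at the columns `s_v` gives
`g (μ²I + A_G) = 0`, so by symmetry `A_G g = -μ² g`, which forces `g = 0`.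
-/

theorem sq_eq_abs_of_mem {R : Type*} [Ring R] [LinearOrder R] [IsOrderedRing R] {x : R}
    (hx : x ∈ ({0, 1, -1} : Set R)) : x ^ 2 = |x| := by
  rcases hx with rfl | rfl | rfl <;> norm_num

theorem linearIndependent_of_eval_eq_apply {ι κ X R : Type*} [Fintype ι] [CommRing R]
    {f : ι → X → R} {Q : Matrix ι κ R} (x : κ → X) (hfQ : ∀ u v, f u (x v) = Q u v)
    (hQ : ∀ g, g ᵥ* Q = 0 → g = 0) : LinearIndependent R f := by
  refine Fintype.linearIndependent_iff.mpr fun g hg => congrFun (hQ g (funext fun v => ?_))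
  simpa [vecMul, dotProduct, hfQ] using congrFun hg (x v)

namespace Matrix

variable {m n ι R K : Type*}

theorem isUnit_det_smul_one_sub [Fintype n] [DecidableEq n] [Field K] {C : Matrix n n K} {μ : K}
    (hC : ¬ ∃ v : n → K, v ≠ 0 ∧ C *ᵥ v = μ • v) : IsUnit (μ • 1 - C).det := by
  refine isUnit_iff_ne_zero.mpr fun hdet => hC ?_
  obtain ⟨v, hv, hv0⟩ := exists_mulVec_eq_zero_iff.mpr hdet
  rw [sub_mulVec, smul_mulVec, one_mulVec, sub_eq_zero] at hv0
  exact ⟨v, hv, hv0.symm⟩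

theorem hasEigenvalue_toLin'_of_mulVec_eq [Fintype n] [DecidableEq n] [Field K] {N : Matrix n n K}
    {a : K} {g : n → K} (hg : g ≠ 0) (h : N *ᵥ g = a • g) :
    Module.End.HasEigenvalue (toLin' N) a :=
  Module.End.hasEigenvalue_of_hasEigenvector
    ⟨Module.End.mem_eigenspace_iff.mpr (by rwa [toLin'_apply]), hg⟩

theorem eq_zero_of_vecMul_smul_one_add_eq_zero [Fintype n] [DecidableEq n] [Field K]
    {N : Matrix n n K} (hN : N.IsSymm) {c : K} (hc : ¬ Module.End.HasEigenvalue (toLin' N) (-c))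
    {g : n → K} (hg : g ᵥ* (c • 1 + N) = 0) : g = 0 := by
  by_contra hg0
  refine hc (hasEigenvalue_toLin'_of_mulVec_eq hg0 ?_)
  rw [vecMul_add, vecMul_smul, vecMul_one, ← hN.eq, vecMul_transpose] at hg
  rw [neg_smul, eq_neg_of_add_eq_zero_right hg]

theorem smul_one_sub_fromBlocks [DecidableEq m] [DecidableEq n] [Ring R] (μ : R)
    (A : Matrix m m R) (B : Matrix m n R) (C : Matrix n m R) (D : Matrix n n R) :
    μ • 1 - fromBlocks A B C D = fromBlocks (μ • 1 - A) (-B) (-C) (μ • 1 - D) := by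
  simp only [← fromBlocks_one, fromBlocks_smul, sub_eq_add_neg, fromBlocks_neg, fromBlocks_add,
    smul_zero, zero_add]

theorem transpose_fromCols_neg_mul_inv_mul [Fintype n] [DecidableEq n] [CommRing R]
    (B : Matrix n m R) (M : Matrix n n R) (hM : IsUnit M.det) (hMT : Mᵀ = M) :
    (fromCols B (-M))ᵀ * M⁻¹ * fromCols B (-M) =
      fromBlocks (Bᵀ * M⁻¹ * B) (-Bᵀ) (-B) M := by
  rw [transpose_fromCols, transpose_neg, hMT, fromRows_mul, fromRows_mul_fromCols]
  simp [Matrix.mul_assoc, hM]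

theorem transpose_mul_mul_apply [Fintype n] [CommSemiring R] (S : Matrix n ι R)
    (N : Matrix n n R) (u v : ι) :
    (Sᵀ * N * S) u v = (fun i => S i u) ⬝ᵥ N *ᵥ (fun i => S i v) := by
  rw [dotProduct_mulVec, mul_apply']
  rfl

theorem sq_smul_one_sub_apply [DecidableEq n] [Ring R] [LinearOrder R] [IsOrderedRing R]
    {A : Matrix n n R} (hdiag : ∀ p, A p p = 0) (hA : ∀ p q, A p q ∈ ({0, 1, -1} : Set R))
    (μ : R) (u v : n) : ((μ • 1 - A) u v) ^ 2 = (μ ^ 2 • 1 + A.map abs) u v := by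
  obtain rfl | huv := eq_or_ne u v
  · simp [hdiag]
  · simp [huv, sq_eq_abs_of_mem (hA u v)]

end Matrix

theorem quadratic_functions_and_underlying_graph_general {k t : ℕ}
    (AS : Matrix (Fin k) (Fin k) ℝ) (B : Matrix (Fin t) (Fin k) ℝ)
    (C : Matrix (Fin t) (Fin t) ℝ)
    (A : Matrix (Fin k ⊕ Fin t) (Fin k ⊕ Fin t) ℝ)
    (hA : A = Matrix.fromBlocks AS Bᵀ B C)
    (hsymm : A.IsSymm)
    (hentries : ∀ p q, A p q ∈ ({0, 1, -1} : Set ℝ))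
    (hdiag : ∀ p, A p p = 0)
    (μ : ℝ)
    (hC : ¬ ∃ v : Fin t → ℝ, v ≠ 0 ∧ C.mulVec v = μ • v)
    (hrec : μ • (1 : Matrix (Fin k) (Fin k) ℝ) - AS =
      Bᵀ * (μ • (1 : Matrix (Fin t) (Fin t) ℝ) - C)⁻¹ * B)
    (S : Matrix (Fin t) (Fin k ⊕ Fin t) ℝ)
    (hS : S = Matrix.fromCols B (C - μ • (1 : Matrix (Fin t) (Fin t) ℝ)))
    (AG : Matrix (Fin k ⊕ Fin t) (Fin k ⊕ Fin t) ℝ)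
    (hAG : AG = fun p q => |A p q|) :
    (∀ u v, (starBilin μ C (fun i => S i u) (fun i => S i v)) ^ 2 =
        (μ ^ 2 • (1 : Matrix (Fin k ⊕ Fin t) (Fin k ⊕ Fin t) ℝ) + AG) u v) ∧
    (¬ Module.End.HasEigenvalue (Matrix.toLin' AG) (-μ ^ 2) →
      LinearIndependent ℝ
        (fun u : Fin k ⊕ Fin t => fun x : Fin t → ℝ =>
          (starBilin μ C (fun i => S i u) x) ^ 2)) := by
  have hCsymm : C.IsSymm := (isSymm_fromBlocks_iff.mp (hA ▸ hsymm)).2.2.2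
  have hMT : (μ • 1 - C)ᵀ = μ • 1 - C := by
    rw [transpose_sub, transpose_smul, transpose_one, hCsymm.eq]
  have hbilin : ∀ u v, starBilin μ C (fun i => S i u) (fun i => S i v) = (μ • 1 - A) u v := by
    intro u v
    rw [starBilin, ← transpose_mul_mul_apply, hS, ← neg_sub,
      transpose_fromCols_neg_mul_inv_mul _ _ (isUnit_det_smul_one_sub hC) hMT, ← hrec, hA,
      smul_one_sub_fromBlocks]
  have hsq : ∀ u v, (starBilin μ C (fun i => S i u) (fun i => S i v)) ^ 2 =
      (μ ^ 2 • (1 : Matrix (Fin k ⊕ Fin t) (Fin k ⊕ Fin t) ℝ) + AG) u v := by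
    intro u v
    rw [hbilin, hAG]
    exact sq_smul_one_sub_apply hdiag hentries μ u v
  refine ⟨hsq, fun hne => linearIndependent_of_eval_eq_apply (fun v i => S i v) hsq
    fun g => eq_zero_of_vecMul_smul_one_add_eq_zero ?_ hne⟩
  rw [hAG]
  exact hsymm.map abs

theorem quadratic_functions_and_underlying_graph {k t : ℕ}
    (AS : Matrix (Fin k) (Fin k) ℝ) (B : Matrix (Fin t) (Fin k) ℝ)
    (C : Matrix (Fin t) (Fin t) ℝ)
    (A : Matrix (Fin k ⊕ Fin t) (Fin k ⊕ Fin t) ℝ)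
    (hA : A = Matrix.fromBlocks AS Bᵀ B C)
    (hsymm : A.IsSymm)
    (hentries : ∀ p q, A p q ∈ ({0, 1, -1} : Set ℝ))
    (hdiag : ∀ p, A p p = 0)
    (μ : ℝ) (hμ : μ ∉ ({0, 1, -1} : Set ℝ))
    (hC : ¬ ∃ v : Fin t → ℝ, v ≠ 0 ∧ C.mulVec v = μ • v)
    (hrec : μ • (1 : Matrix (Fin k) (Fin k) ℝ) - AS =
      Bᵀ * (μ • (1 : Matrix (Fin t) (Fin t) ℝ) - C)⁻¹ * B)
    (S : Matrix (Fin t) (Fin k ⊕ Fin t) ℝ)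
    (hS : S = Matrix.fromCols B (C - μ • (1 : Matrix (Fin t) (Fin t) ℝ)))
    (AG : Matrix (Fin k ⊕ Fin t) (Fin k ⊕ Fin t) ℝ)
    (hAG : AG = fun p q => |A p q|) :
    (∀ u v, (starBilin μ C (fun i => S i u) (fun i => S i v)) ^ 2 =
        (μ ^ 2 • (1 : Matrix (Fin k ⊕ Fin t) (Fin k ⊕ Fin t) ℝ) + AG) u v) ∧
    (¬ Module.End.HasEigenvalue (Matrix.toLin' AG) (-μ ^ 2) →
      LinearIndependent ℝ
        (fun u : Fin k ⊕ Fin t => fun x : Fin t → ℝ =>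
          (starBilin μ C (fun i => S i u) x) ^ 2)) :=
  quadratic_functions_and_underlying_graph_general AS B C A hA hsymm hentries hdiag μ hC hrec S hS
    AG hAG
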